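/- arXiv:2209.14720 — 2 statements merged into one kernel-verified Lean document; each statement's English description precedes it below -/
import Mathlib

section
/- Let Δ₅ ⊂ ℝ² be the convex hull of (0,0), (5,0), (5,2), (7/2,7/2) and let P₅(x,y) = 4·x³·y³·(x+y)²·(x−y)². Then (∫_{Δ₅} x·P₅ dxdy)/(∫_{Δ₅} P₅ dxdy) = 1426329931935/326044716608 and (∫_{Δ₅} y·P₅ dxdy)/(∫_{Δ₅} P₅ dxdy) = 4418316612263/2282313016256; in particular the first quantity is greater than 4 and the sum of the two quantities is greater than 6. -/
/-!
`Δ₅` is the polygon `0 ≤ y ≤ x`, `x + y ≤ 7`, `x ≤ 5`. Cut along `x = 7/2`, it is the union of the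
regions `0 ≤ y ≤ x` over `[0, 7/2]` and `0 ≤ y ≤ 7 - x` over `(7/2, 5]`, so by Fubini each of the
three integrals `∫ P`, `∫ x P`, `∫ y P` is a sum of two iterated integrals of polynomials, which are
evaluated exactly.
-/

open MeasureTheory Set

section Fubini

variable {α β E : Type*} [MeasurableSpace α] [MeasurableSpace β] {μ : Measure α} {ν : Measure β}
  [SFinite μ] [SFinite ν] [NormedAddCommGroup E] [NormedSpace ℝ E]

theorem setIntegral_prod_eq_integral_setIntegral_preimage {s : Set (α × β)} (hs : MeasurableSet s)
    {F : α × β → E} (hF : IntegrableOn F s (μ.prod ν)) :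
    ∫ p in s, F p ∂μ.prod ν = ∫ x, ∫ y in Prod.mk x ⁻¹' s, F (x, y) ∂ν ∂μ := by
  rw [← integral_indicator hs, integral_prod _ ((integrable_indicator_iff hs).2 hF)]
  congr 1 with x
  rw [← integral_indicator (measurable_prodMk_left hs)]
  rfl

theorem setIntegral_region_between_cc {s : Set α} {f g : α → ℝ} (hs : MeasurableSet s)
    (hf : Measurable f) (hg : Measurable g) (hfg : ∀ x ∈ s, f x ≤ g x) {F : α × ℝ → E}
    (hF : IntegrableOn F {p | p.1 ∈ s ∧ p.2 ∈ Icc (f p.1) (g p.1)} (μ.prod volume)) :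
    ∫ p in {p | p.1 ∈ s ∧ p.2 ∈ Icc (f p.1) (g p.1)}, F p ∂μ.prod volume =
      ∫ x in s, (∫ y in f x..g x, F (x, y)) ∂μ := by
  rw [setIntegral_prod_eq_integral_setIntegral_preimage
    (measurableSet_region_between_cc hf hg hs) hF, ← integral_indicator hs]
  congr 1 with x
  by_cases hx : x ∈ s
  · have hfiber : Prod.mk x ⁻¹' {p | p.1 ∈ s ∧ p.2 ∈ Icc (f p.1) (g p.1)} = Icc (f x) (g x) := by
      ext y; simp [hx]
    rw [indicator_of_mem hx, hfiber, integral_Icc_eq_integral_Ioc,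
      intervalIntegral.integral_of_le (hfg x hx)]
  · simp [hx]

end Fubini

theorem add_smul_add_smul_mem_convexHull {E : Type*} [AddCommGroup E] [Module ℝ E] {s : Set E}
    {u v w : E} (hu : u ∈ s) (hv : v ∈ s) (hw : w ∈ s) {a b c : ℝ} (ha : 0 ≤ a) (hb : 0 ≤ b)
    (hc : 0 ≤ c) (habc : a + b + c = 1) : a • u + b • v + c • w ∈ convexHull ℝ s := by
  have := (convex_convexHull ℝ s).sum_mem (t := Finset.univ) (w := ![a, b, c]) (z := ![u, v, w])
    (by simp [Fin.forall_fin_succ, ha, hb, hc]) (by simp [Fin.sum_univ_three, habc])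
    (by simp [Fin.forall_fin_succ, subset_convexHull ℝ s hu, subset_convexHull ℝ s hv,
      subset_convexHull ℝ s hw])
  simpa [Fin.sum_univ_three] using this

def Delta5 : Set (ℝ × ℝ) := convexHull ℝ {((0 : ℝ), (0 : ℝ)), (5, 0), (5, 2), (7 / 2, 7 / 2)}

-- the Duistermaat–Heckman density `P₅`
def dhDensity5 (p : ℝ × ℝ) : ℝ := 4 * p.1 ^ 3 * p.2 ^ 3 * (p.1 + p.2) ^ 2 * (p.1 - p.2) ^ 2

theorem Delta5_eq_halfplanes :
    Delta5 = {p : ℝ × ℝ | 0 ≤ p.2 ∧ p.2 ≤ p.1 ∧ p.1 + p.2 ≤ 7 ∧ p.1 ≤ 5} := by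
  apply subset_antisymm
  · refine convexHull_min ?_ ?_
    · rintro p (rfl | rfl | rfl | rfl) <;> norm_num
    · rintro p ⟨hp₁, hp₂, hp₃, hp₄⟩ q ⟨hq₁, hq₂, hq₃, hq₄⟩ a b ha hb hab
      simp only [mem_ofPred_eq, Prod.fst_add, Prod.snd_add, Prod.smul_fst, Prod.smul_snd,
        smul_eq_mul]
      refine ⟨by positivity, ?_, ?_, ?_⟩ <;>
        linarith [mul_le_mul_of_nonneg_left hp₂ ha, mul_le_mul_of_nonneg_left hq₂ hb,
          mul_le_mul_of_nonneg_left hp₃ ha, mul_le_mul_of_nonneg_left hq₃ hb,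
          mul_le_mul_of_nonneg_left hp₄ ha, mul_le_mul_of_nonneg_left hq₄ hb]
  · rintro ⟨x, y⟩ ⟨hy, hyx, hxy, hx⟩
    rw [Delta5]
    -- barycentric coordinates in the triangle `(0,0), (5,0), (5,2)`,
    -- resp. `(0,0), (5,2), (7/2,7/2)`
    rcases le_or_gt (5 * y) (2 * x) with h | h
    · rw [show (x, y) = (1 - x / 5) • ((0 : ℝ), (0 : ℝ)) + (x / 5 - y / 2) • ((5 : ℝ), (0 : ℝ)) +
          (y / 2) • ((5 : ℝ), (2 : ℝ)) by ext <;> simp; ring]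
      exact add_smul_add_smul_mem_convexHull (by simp) (by simp) (by simp) (by linarith)
        (by linarith) (by linarith) (by ring)
    · rw [show (x, y) = ((7 - x - y) / 7) • ((0 : ℝ), (0 : ℝ)) +
          ((x - y) / 3) • ((5 : ℝ), (2 : ℝ)) +
          ((10 * y - 4 * x) / 21) • ((7 / 2 : ℝ), (7 / 2 : ℝ)) by ext <;> simp <;> ring]
      exact add_smul_add_smul_mem_convexHull (by simp) (by simp) (by simp) (by linarith)
        (by linarith) (by linarith) (by ring)

theorem Delta5_eq_union : Delta5 = {p : ℝ × ℝ | p.1 ∈ Icc 0 (7 / 2) ∧ p.2 ∈ Icc 0 p.1} ∪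
    {p : ℝ × ℝ | p.1 ∈ Ioc (7 / 2) 5 ∧ p.2 ∈ Icc 0 (7 - p.1)} := by
  rw [Delta5_eq_halfplanes]
  ext ⟨x, y⟩
  simp only [mem_ofPred_eq, mem_union, mem_Icc, mem_Ioc]
  constructor
  · rintro ⟨hy, hyx, hxy, hx⟩
    rcases le_or_gt x (7 / 2) with h | h
    · exact Or.inl ⟨⟨hy.trans hyx, h⟩, hy, hyx⟩
    · exact Or.inr ⟨⟨h, hx⟩, hy, by linarith⟩
  · rintro (⟨⟨hx, h⟩, hy, hyx⟩ | ⟨⟨h, hx⟩, hy, hxy⟩) <;> refine ⟨hy, ?_, ?_, ?_⟩ <;> linarith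

theorem isCompact_Delta5 : IsCompact Delta5 := (toFinite _).isCompact_convexHull ℝ

theorem integral_Delta5 {F : ℝ × ℝ → ℝ} (hF : Continuous F) :
    ∫ p in Delta5, F p =
      (∫ x in (0 : ℝ)..7 / 2, ∫ y in (0 : ℝ)..x, F (x, y)) +
        ∫ x in (7 / 2 : ℝ)..5, ∫ y in (0 : ℝ)..7 - x, F (x, y) := by
  have hint : IntegrableOn F Delta5 := hF.continuousOn.integrableOn_compact isCompact_Delta5
  rw [Delta5_eq_union] at hint ⊢
  have h₁ : ∫ p in {p : ℝ × ℝ | p.1 ∈ Icc 0 (7 / 2) ∧ p.2 ∈ Icc 0 p.1}, F p =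
      ∫ x in (0 : ℝ)..7 / 2, ∫ y in (0 : ℝ)..x, F (x, y) := by
    rw [intervalIntegral.integral_of_le (by norm_num), ← integral_Icc_eq_integral_Ioc,
      Measure.volume_eq_prod]
    exact setIntegral_region_between_cc measurableSet_Icc measurable_const measurable_id
      (fun x hx => hx.1) (hint.mono_set subset_union_left)
  have h₂ : ∫ p in {p : ℝ × ℝ | p.1 ∈ Ioc (7 / 2) 5 ∧ p.2 ∈ Icc 0 (7 - p.1)}, F p =
      ∫ x in (7 / 2 : ℝ)..5, ∫ y in (0 : ℝ)..7 - x, F (x, y) := by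
    rw [intervalIntegral.integral_of_le (by norm_num), Measure.volume_eq_prod]
    exact setIntegral_region_between_cc (g := fun x => 7 - x) measurableSet_Ioc measurable_const
      (by fun_prop) (fun x hx => sub_nonneg.2 (hx.2.trans (by norm_num)))
      (hint.mono_set subset_union_right)
  have hdisj : Disjoint {p : ℝ × ℝ | p.1 ∈ Icc 0 (7 / 2) ∧ p.2 ∈ Icc 0 p.1}
      {p : ℝ × ℝ | p.1 ∈ Ioc (7 / 2) 5 ∧ p.2 ∈ Icc 0 (7 - p.1)} :=
    disjoint_left.2 fun p hp₁ hp₂ => by linarith [hp₁.1.2, hp₂.1.1]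
  rw [setIntegral_union hdisj (measurableSet_region_between_cc measurable_const (by fun_prop)
      measurableSet_Ioc) (hint.mono_set subset_union_left) (hint.mono_set subset_union_right),
    h₁, h₂]

theorem integrals_dhDensity5_Delta5 :
    ∫ p in Delta5, dhDensity5 p = 391880669 / 360 ∧
      ∫ p in Delta5, p.1 * dhDensity5 p = 95088662129 / 19968 ∧
      ∫ p in Delta5, p.2 * dhDensity5 p = 4418316612263 / 2096640 := by
  refine ⟨?_, ?_, ?_⟩ <;>
  · rw [integral_Delta5 (by unfold dhDensity5; fun_prop)]
    simp only [dhDensity5]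
    -- the first pass integrates the monomials in `y`, the second those in `x`
    ring_nf
    simp (disch := (apply Continuous.intervalIntegrable; fun_prop)) only
      [intervalIntegral.integral_add, intervalIntegral.integral_sub,
        intervalIntegral.integral_mul_const, intervalIntegral.integral_const_mul, integral_pow]
    ring_nf
    simp (disch := (apply Continuous.intervalIntegrable; fun_prop)) only
      [intervalIntegral.integral_add, intervalIntegral.integral_sub,
        intervalIntegral.integral_mul_const, integral_pow]
    norm_num

/-- The barycenter of the moment polytope `Δ₅` of `X₅` with respect to the
Duistermaat–Heckman measure is `(1426329931935/326044716608, 4418316612263/2282313016256)`;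
in particular `x̄ > 4` and `x̄ + ȳ > 6`. -/
theorem barycenter_Delta5 :
    let Δ : Set (ℝ × ℝ) := convexHull ℝ
      {((0 : ℝ), (0 : ℝ)), (5, 0), (5, 2), (7 / 2, 7 / 2)}
    let P : ℝ × ℝ → ℝ := fun p =>
      4 * p.1 ^ 3 * p.2 ^ 3 * (p.1 + p.2) ^ 2 * (p.1 - p.2) ^ 2
    let xbar : ℝ := (∫ p in Δ, p.1 * P p) / (∫ p in Δ, P p)
    let ybar : ℝ := (∫ p in Δ, p.2 * P p) / (∫ p in Δ, P p)
    xbar = 1426329931935 / 326044716608 ∧ ybar = 4418316612263 / 2282313016256 ∧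
      4 < xbar ∧ 6 < xbar + ybar := by
  intro Δ P xbar ybar
  obtain ⟨hP, hX, hY⟩ := integrals_dhDensity5_Delta5
  have hxbar : xbar = 1426329931935 / 326044716608 := by
    change (∫ p in Delta5, p.1 * dhDensity5 p) / (∫ p in Delta5, dhDensity5 p) = _
    rw [hX, hP]
    norm_num
  have hybar : ybar = 4418316612263 / 2282313016256 := by
    change (∫ p in Delta5, p.2 * dhDensity5 p) / (∫ p in Delta5, dhDensity5 p) = _
    rw [hY, hP]
    norm_num
  exact ⟨hxbar, hybar, by rw [hxbar]; norm_num, by rw [hxbar, hybar]; norm_num⟩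
end

section
/- Let Δ₆^{Bℓ} ⊂ ℝ² be the convex hull of (0,0), (6,0), (6,2), (5,4), (9/2,9/2) and let P₆(x,y) = 4·x⁵·y⁵·(x+y)²·(x−y)². Then (∫_{Δ₆^{Bℓ}} x·P₆ dxdy)/(∫_{Δ₆^{Bℓ}} P₆ dxdy) = 5817870364882097045/1125028875118233728 and (∫_{Δ₆^{Bℓ}} y·P₆ dxdy)/(∫_{Δ₆^{Bℓ}} P₆ dxdy) = 15784597990157403671/5625144375591168640; in particular the sum of these two quantities is strictly less than 8. -/
/-!
`Δ₆^{Bℓ}` is the region `0 ≤ y ≤ min (x, 9 - x, 14 - 2x)` over `0 ≤ x ≤ 6`: this region is convex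
because the roof is concave, and it lies in the convex hull because the fan from the vertex
`(0, 0)` cuts it into three triangles spanned by vertices. By Fubini, every moment of `P₆` over
`Δ₆^{Bℓ}` becomes a sum of iterated integrals of polynomials over `[0, 9/2]`, `[9/2, 5]` and
`[5, 6]`, which are evaluated exactly:
`∫ P₆ = 517016946285953/288288`, `∫ x P₆ = 5817870364882097045/627314688` and
`∫ y P₆ = 1434963453650673061/285143040`.
-/

open MeasureTheory Set

theorem Convex.smul_add_smul_add_smul_mem {𝕜 E : Type*} [Field 𝕜] [LinearOrder 𝕜]
    [IsStrictOrderedRing 𝕜] [AddCommGroup E] [Module 𝕜 E] {s : Set E} (hs : Convex 𝕜 s)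
    {u v w : E} (hu : u ∈ s) (hv : v ∈ s) (hw : w ∈ s) {a b c : 𝕜}
    (ha : 0 ≤ a) (hb : 0 ≤ b) (hc : 0 ≤ c) (habc : a + b + c = 1) :
    a • u + b • v + c • w ∈ s := by
  simpa [Fin.sum_univ_three, add_assoc] using hs.sum_mem (t := Finset.univ) (w := ![a, b, c])
    (z := ![u, v, w]) (fun i _ => by fin_cases i <;> assumption)
    (by simp [Fin.sum_univ_three, habc]) (fun i _ => by fin_cases i <;> assumption)

theorem setIntegral_closedRegionBetween {E : Type*} [NormedAddCommGroup E] [NormedSpace ℝ E]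
    {F : ℝ × ℝ → E} (hF : Continuous F) {f g : ℝ → ℝ} (hf : Continuous f) (hg : Continuous g)
    {a b : ℝ} (hab : a ≤ b) (hfg : ∀ x ∈ Icc a b, f x ≤ g x) :
    ∫ p in {p : ℝ × ℝ | p.1 ∈ Icc a b ∧ p.2 ∈ Icc (f p.1) (g p.1)}, F p =
      ∫ x in a..b, ∫ y in f x..g x, F (x, y) := by
  set S := {p : ℝ × ℝ | p.1 ∈ Icc a b ∧ p.2 ∈ Icc (f p.1) (g p.1)}
  have hS_closed : IsClosed S :=
    (isClosed_Icc.preimage continuous_fst).inter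
      ((isClosed_le (hf.comp continuous_fst) continuous_snd).inter
        (isClosed_le continuous_snd (hg.comp continuous_fst)))
  obtain ⟨m, hm⟩ := (isCompact_Icc (a := a) (b := b)).bddBelow_image hf.continuousOn
  obtain ⟨M, hM⟩ := (isCompact_Icc (a := a) (b := b)).bddAbove_image hg.continuousOn
  have hS_compact : IsCompact S := by
    refine (isCompact_Icc (a := (a, m)) (b := (b, M))).of_isClosed_subset hS_closed ?_
    rintro ⟨x, y⟩ ⟨hx, hy⟩
    exact ⟨⟨hx.1, (hm ⟨x, hx, rfl⟩).trans hy.1⟩, ⟨hx.2, hy.2.trans (hM ⟨x, hx, rfl⟩)⟩⟩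
  have hslice : ∀ x, ∫ y, S.indicator F (x, y) =
      (Icc a b).indicator (fun x => ∫ y in Icc (f x) (g x), F (x, y)) x := by
    intro x
    by_cases hx : x ∈ Icc a b
    · simp only [indicator_of_mem hx, ← integral_indicator measurableSet_Icc]
      congr 1 with y
      simp only [S, indicator, mem_ofPred_eq, hx, true_and]
    · have hzero : ∀ y, S.indicator F (x, y) = 0 := fun y => indicator_of_notMem (fun h => hx h.1) F
      simp only [hzero, integral_zero, indicator_of_notMem hx]
  rw [← integral_indicator hS_closed.measurableSet, Measure.volume_eq_prod,
    integral_prod _ (by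
      rw [← Measure.volume_eq_prod, integrable_indicator_iff hS_closed.measurableSet]
      exact hF.continuousOn.integrableOn_compact hS_compact)]
  simp only [hslice]
  rw [integral_indicator measurableSet_Icc, intervalIntegral.integral_of_le hab,
    ← integral_Icc_eq_integral_Ioc]
  refine setIntegral_congr_fun measurableSet_Icc fun x hx => ?_
  rw [intervalIntegral.integral_of_le (hfg x hx), integral_Icc_eq_integral_Ioc]

def deltaSixRoof (x : ℝ) : ℝ := min x (min (9 - x) (14 - 2 * x))

def deltaSix : Set (ℝ × ℝ) := {p | p.1 ∈ Icc 0 6 ∧ p.2 ∈ Icc 0 (deltaSixRoof p.1)}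

theorem concaveOn_deltaSixRoof : ConcaveOn ℝ univ deltaSixRoof :=
  (concaveOn_id convex_univ).inf
    (((concaveOn_const 9 convex_univ).sub (convexOn_id convex_univ)).inf
      ((concaveOn_const 14 convex_univ).sub ((convexOn_id convex_univ).smul zero_le_two)))

@[fun_prop]
theorem continuous_deltaSixRoof : Continuous deltaSixRoof := by
  unfold deltaSixRoof; fun_prop

theorem deltaSixRoof_nonneg {x : ℝ} (hx : x ∈ Icc 0 6) : 0 ≤ deltaSixRoof x :=
  le_min hx.1 (le_min (by linarith [hx.2]) (by linarith [hx.2]))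

theorem deltaSixRoof_of_le {x : ℝ} (h : x ≤ 9 / 2) : deltaSixRoof x = x :=
  min_eq_left (le_min (by linarith) (by linarith))

theorem deltaSixRoof_of_mem_Icc {x : ℝ} (h : x ∈ Icc (9 / 2) 5) : deltaSixRoof x = 9 - x := by
  unfold deltaSixRoof
  rw [min_eq_left (by linarith [h.2] : 9 - x ≤ 14 - 2 * x), min_eq_right (by linarith [h.1])]

theorem deltaSixRoof_of_ge {x : ℝ} (h : 5 ≤ x) : deltaSixRoof x = 14 - 2 * x := by
  unfold deltaSixRoof
  rw [min_eq_right (by linarith : 14 - 2 * x ≤ 9 - x), min_eq_right (by linarith)]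

theorem convex_deltaSix : Convex ℝ deltaSix := by
  have h := (concaveOn_deltaSixRoof.subset (subset_univ _) (convex_Icc 0 6)).convex_hypograph.inter
    (convex_halfSpace_ge (LinearMap.snd ℝ ℝ ℝ).isLinear 0)
  convert h using 1
  ext p
  simp only [deltaSix, mem_Icc, mem_inter_iff, mem_ofPred_eq]
  tauto

theorem convexHull_eq_deltaSix :
    convexHull ℝ {((0 : ℝ), (0 : ℝ)), (6, 0), (6, 2), (5, 4), (9 / 2, 9 / 2)} = deltaSix := by
  refine (convexHull_min ?_ convex_deltaSix).antisymm ?_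
  · rintro p (rfl | rfl | rfl | rfl | rfl) <;> norm_num [deltaSix, deltaSixRoof]
  rintro ⟨x, y⟩ ⟨⟨-, hx6⟩, hy0, hy⟩
  simp only [deltaSixRoof, le_min_iff] at hx6 hy0 hy
  obtain ⟨hyx, hy9, hy14⟩ := hy
  have hull := convex_convexHull ℝ {((0 : ℝ), (0 : ℝ)), (6, 0), (6, 2), (5, 4), (9 / 2, 9 / 2)}
  have mem {v : ℝ × ℝ}
      (hv : v ∈ ({(0, 0), (6, 0), (6, 2), (5, 4), (9 / 2, 9 / 2)} : Set (ℝ × ℝ))) :=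
    subset_convexHull ℝ _ hv
  rcases le_or_gt (3 * y) x with h₁ | h₁
  · convert hull.smul_add_smul_add_smul_mem (mem (by simp)) (mem (by simp)) (mem (by simp))
      (u := (0, 0)) (v := (6, 0)) (w := (6, 2))
      (a := 1 - x / 6) (b := x / 6 - y / 2) (c := y / 2)
      (by linarith) (by linarith) (by linarith) (by ring) using 1
    ext <;> simp only [Prod.fst_add, Prod.snd_add, Prod.smul_fst, Prod.smul_snd, smul_eq_mul] <;> ring
  rcases le_or_gt (5 * y) (4 * x) with h₂ | h₂
  · convert hull.smul_add_smul_add_smul_mem (mem (by simp)) (mem (by simp)) (mem (by simp))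
      (u := (0, 0)) (v := (6, 2)) (w := (5, 4))
      (a := 1 - (2 * x + y) / 14) (b := (4 * x - 5 * y) / 14) (c := (3 * y - x) / 7)
      (by linarith) (by linarith) (by linarith) (by ring) using 1
    ext <;> simp only [Prod.fst_add, Prod.snd_add, Prod.smul_fst, Prod.smul_snd, smul_eq_mul] <;> ring
  · convert hull.smul_add_smul_add_smul_mem (mem (by simp)) (mem (by simp)) (mem (by simp))
      (u := (0, 0)) (v := (5, 4)) (w := (9 / 2, 9 / 2))
      (a := 1 - (x + y) / 9) (b := x - y) (c := 2 / 9 * (5 * y - 4 * x))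
      (by linarith) (by linarith) (by linarith) (by ring) using 1
    ext <;> simp only [Prod.fst_add, Prod.snd_add, Prod.smul_fst, Prod.smul_snd, smul_eq_mul] <;> ring

theorem setIntegral_deltaSix {E : Type*} [NormedAddCommGroup E] [NormedSpace ℝ E]
    {F : ℝ × ℝ → E} (hF : Continuous F) :
    ∫ p in deltaSix, F p =
      (∫ x in (0 : ℝ)..9 / 2, ∫ y in (0 : ℝ)..x, F (x, y)) +
        (∫ x in (9 / 2 : ℝ)..5, ∫ y in (0 : ℝ)..9 - x, F (x, y)) +
          ∫ x in (5 : ℝ)..6, ∫ y in (0 : ℝ)..14 - 2 * x, F (x, y) := by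
  have hinner : Continuous fun x => ∫ y in (0 : ℝ)..deltaSixRoof x, F (x, y) :=
    intervalIntegral.continuous_parametric_intervalIntegral_of_continuous
      (f := fun x y => F (x, y)) (by fun_prop) continuous_deltaSixRoof
  rw [deltaSix, setIntegral_closedRegionBetween hF (f := fun _ => 0) continuous_const
      continuous_deltaSixRoof (by norm_num) fun x hx => deltaSixRoof_nonneg hx,
    ← intervalIntegral.integral_add_adjacent_intervals (b := 9 / 2)
      (hinner.intervalIntegrable _ _) (hinner.intervalIntegrable _ _),
    ← intervalIntegral.integral_add_adjacent_intervals (a := 9 / 2) (b := 5)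
      (hinner.intervalIntegrable _ _) (hinner.intervalIntegrable _ _), ← add_assoc]
  refine congrArg₂ (· + ·) (congrArg₂ (· + ·) ?_ ?_) ?_ <;>
    refine intervalIntegral.integral_congr fun x hx => ?_ <;>
    rw [uIcc_of_le (by norm_num)] at hx
  · rw [deltaSixRoof_of_le hx.2]
  · rw [deltaSixRoof_of_mem_Icc hx]
  · rw [deltaSixRoof_of_ge hx.1]

/-- The Duistermaat–Heckman density `P₆`. -/
def dhDensity (p : ℝ × ℝ) : ℝ := 4 * p.1 ^ 5 * p.2 ^ 5 * (p.1 + p.2) ^ 2 * (p.1 - p.2) ^ 2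

@[fun_prop]
theorem continuous_dhDensity : Continuous dhDensity := by
  unfold dhDensity; fun_prop

theorem integral_dhDensity_slice (x c : ℝ) :
    ∫ y in (0 : ℝ)..c, dhDensity (x, y) =
      2 / 3 * x ^ 9 * c ^ 6 - x ^ 7 * c ^ 8 + 2 / 5 * x ^ 5 * c ^ 10 := by
  simp only [dhDensity]
  ring_nf
  simp (disch := (apply Continuous.intervalIntegrable; fun_prop)) only
    [intervalIntegral.integral_add, intervalIntegral.integral_sub,
      intervalIntegral.integral_mul_const, intervalIntegral.integral_const_mul, integral_pow]
  ring

theorem integral_snd_mul_dhDensity_slice (x c : ℝ) :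
    ∫ y in (0 : ℝ)..c, y * dhDensity (x, y) =
      4 / 7 * x ^ 9 * c ^ 7 - 8 / 9 * x ^ 7 * c ^ 9 + 4 / 11 * x ^ 5 * c ^ 11 := by
  simp only [dhDensity]
  ring_nf
  simp (disch := (apply Continuous.intervalIntegrable; fun_prop)) only
    [intervalIntegral.integral_add, intervalIntegral.integral_sub,
      intervalIntegral.integral_mul_const, integral_pow]
  ring

theorem setIntegral_dhDensity_deltaSix :
    ∫ p in deltaSix, dhDensity p = 517016946285953 / 288288 := by
  rw [setIntegral_deltaSix continuous_dhDensity]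
  simp only [integral_dhDensity_slice]
  ring_nf
  simp (disch := (apply Continuous.intervalIntegrable; fun_prop)) only
    [intervalIntegral.integral_add, intervalIntegral.integral_sub,
      intervalIntegral.integral_mul_const, integral_pow]
  norm_num

theorem setIntegral_fst_mul_dhDensity_deltaSix :
    ∫ p in deltaSix, p.1 * dhDensity p = 5817870364882097045 / 627314688 := by
  rw [setIntegral_deltaSix (by fun_prop)]
  simp only [intervalIntegral.integral_const_mul, integral_dhDensity_slice]
  ring_nf
  simp (disch := (apply Continuous.intervalIntegrable; fun_prop)) only
    [intervalIntegral.integral_add, intervalIntegral.integral_sub,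
      intervalIntegral.integral_mul_const, integral_pow]
  norm_num

theorem setIntegral_snd_mul_dhDensity_deltaSix :
    ∫ p in deltaSix, p.2 * dhDensity p = 1434963453650673061 / 285143040 := by
  rw [setIntegral_deltaSix (by fun_prop)]
  simp only [integral_snd_mul_dhDensity_slice]
  ring_nf
  simp (disch := (apply Continuous.intervalIntegrable; fun_prop)) only
    [intervalIntegral.integral_add, intervalIntegral.integral_sub,
      intervalIntegral.integral_mul_const, integral_pow]
  norm_num

/-- The barycenter of the moment polytope `Δ₆^{Bℓ}` of the blow-up `Bℓ_Z(X₆)` with respect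
to the Duistermaat–Heckman measure is
`(5817870364882097045/1125028875118233728, 15784597990157403671/5625144375591168640)`;
in particular `x̄ + ȳ < 8`. -/
theorem barycenter_Delta6_blowup :
    let Δ : Set (ℝ × ℝ) := convexHull ℝ
      {((0 : ℝ), (0 : ℝ)), (6, 0), (6, 2), (5, 4), (9 / 2, 9 / 2)}
    let P : ℝ × ℝ → ℝ := fun p =>
      4 * p.1 ^ 5 * p.2 ^ 5 * (p.1 + p.2) ^ 2 * (p.1 - p.2) ^ 2
    let xbar : ℝ := (∫ p in Δ, p.1 * P p) / (∫ p in Δ, P p)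
    let ybar : ℝ := (∫ p in Δ, p.2 * P p) / (∫ p in Δ, P p)
    xbar = 5817870364882097045 / 1125028875118233728 ∧
      ybar = 15784597990157403671 / 5625144375591168640 ∧
      xbar + ybar < 8 := by
  intro Δ P xbar ybar
  have hΔ : Δ = deltaSix := convexHull_eq_deltaSix
  have hP : P = dhDensity := rfl
  simp only [xbar, ybar, hΔ, hP, setIntegral_dhDensity_deltaSix,
    setIntegral_fst_mul_dhDensity_deltaSix, setIntegral_snd_mul_dhDensity_deltaSix]
  norm_num
end
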